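/- Let M be a 3-connected matroid, X ⊆ E(M) with λ(X) = 2, |X| ≥ 3, and |E(M)| ≥ |X| + 4. If e ∈ cl(X) − X, then either e is contained in a triad of M, or M\e is 3-connected. -/

import Mathlib

open Matroid Set

namespace DetPairs

variable {α : Type*}

/-- The rank of a set in a matroid: the maximum size of an independent subset
(as an integer, for convenient arithmetic). -/
noncomputable def r (M : Matroid α) (X : Set α) : ℤ :=
  ((sSup (Set.ncard '' {I | M.Indep I ∧ I ⊆ X}) : ℕ) : ℤ)

/-- The connectivity function `λ_M(X) = r(X) + r(E − X) − r(M)`. -/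
noncomputable def lam (M : Matroid α) (X : Set α) : ℤ :=
  r M X + r M (M.E \ X) - r M M.E

/-- Local connectivity `⊓(X,Y) = r(X) + r(Y) − r(X ∪ Y)`. -/
noncomputable def localConn (M : Matroid α) (X Y : Set α) : ℤ :=
  r M X + r M Y - r M (X ∪ Y)

/-- A circuit: a minimal dependent set. -/
def Circuit (M : Matroid α) (C : Set α) : Prop :=
  C ⊆ M.E ∧ ¬ M.Indep C ∧ ∀ D, D ⊂ C → M.Indep D

/-- A cocircuit: a circuit of the dual. -/
def Cocircuit (M : Matroid α) (C : Set α) : Prop := Circuit M✶ C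

/-- A triangle: a 3-element circuit. -/
def Triangle (M : Matroid α) (T : Set α) : Prop := Circuit M T ∧ T.ncard = 3

/-- A triad: a 3-element cocircuit. -/
def Triad (M : Matroid α) (T : Set α) : Prop := Cocircuit M T ∧ T.ncard = 3

/-- A quad: a 4-element set that is both a circuit and a cocircuit. -/
def Quad (M : Matroid α) (Q : Set α) : Prop :=
  Circuit M Q ∧ Cocircuit M Q ∧ Q.ncard = 4

/-- Deletion of a set of elements. -/
def Del (M : Matroid α) (D : Set α) : Matroid α := M ↾ (M.E \ D)

/-- Contraction of a set of elements. -/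
def Con (M : Matroid α) (C : Set α) : Matroid α := (M✶ ↾ (M.E \ C))✶

/-- `M` is 3-connected: it has no `k`-separation for `k = 1, 2`, where a
`k`-separation is a set `X` with `λ(X) = k − 1`, `|X| ≥ k` and `|E − X| ≥ k`. -/
def ThreeConnected (M : Matroid α) : Prop :=
  ∀ k : ℕ, 0 < k → k < 3 → ∀ X ⊆ M.E,
    ¬ (lam M X = (k : ℤ) - 1 ∧ (k : ℤ) ≤ X.ncard ∧ (k : ℤ) ≤ (M.E \ X).ncard)

/-- A detachable pair: distinct elements `e, f` such that `M \ e \ f` or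
`M / e / f` is 3-connected. -/
def DetachablePair (M : Matroid α) (e f : α) : Prop :=
  e ≠ f ∧ e ∈ M.E ∧ f ∈ M.E ∧
    (ThreeConnected (Del M {e, f}) ∨ ThreeConnected (Con M {e, f}))

/-- The triple of elements with indices `i, i+1, i+2` in an ordering. -/
def tri (e : ℕ → α) (i : ℕ) : Set α := {e i, e (i + 1), e (i + 2)}

/-- `(e 0, …, e (n-1))` is a fan ordering of length `n ≥ 3` in `M`:
consecutive triples alternate between triangles and triads. -/
def FanOrd (M : Matroid α) (n : ℕ) (e : ℕ → α) : Prop :=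
  3 ≤ n ∧ Set.InjOn e (Set.Iio n) ∧ (∀ i < n, e i ∈ M.E) ∧
    (Triangle M (tri e 0) ∨ Triad M (tri e 0)) ∧
    ∀ i, i + 3 < n →
      (Triangle M (tri e i) → Triad M (tri e (i + 1))) ∧
      (Triad M (tri e i) → Triangle M (tri e (i + 1)))

/-- A fan (as a set): either a 2-element subset of the ground set, or the
underlying set of a fan ordering of length at least 3. -/
def IsFan (M : Matroid α) (F : Set α) : Prop :=
  (F ⊆ M.E ∧ F.ncard = 2) ∨ ∃ n e, FanOrd M n e ∧ F = e '' Set.Iio n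

/-- A maximal fan: a fan contained in no strictly larger fan. -/
def MaximalFan (M : Matroid α) (F : Set α) : Prop :=
  IsFan M F ∧ ∀ F', IsFan M F' → F ⊆ F' → F' = F

/-- `M` is a wheel or a whirl: its ground set has a cyclic ordering of even size
`2n` in which consecutive triples alternate between triangles and triads. -/
def IsWheelOrWhirl (M : Matroid α) : Prop :=
  ∃ (n : ℕ) (e : ℕ → α), 2 ≤ n ∧ Set.InjOn e (Set.Iio (2 * n)) ∧
    M.E = e '' Set.Iio (2 * n) ∧
    ∀ i < 2 * n,
      (i % 2 = 0 → Triangle M {e i, e ((i + 1) % (2 * n)), e ((i + 2) % (2 * n))}) ∧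
      (i % 2 = 1 → Triad M {e i, e ((i + 1) % (2 * n)), e ((i + 2) % (2 * n))})

/-- An `M(K₄)`-separator: a 6-element set `{a,b,c,x,y,z}` where `{x,y,z}` is a
triad and `{a,b,c}`, `{a,x,y}`, `{b,x,z}`, `{c,y,z}` are triangles. -/
def MK4Sep (M : Matroid α) (S : Set α) : Prop :=
  ∃ a b c x y z : α, S = {a, b, c, x, y, z} ∧ S.ncard = 6 ∧
    Triad M {x, y, z} ∧ Triangle M {a, b, c} ∧ Triangle M {a, x, y} ∧
    Triangle M {b, x, z} ∧ Triangle M {c, y, z}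

/-- A vertical 3-separation `(X, {e}, Y)` of `M`. -/
def VertThreeSep (M : Matroid α) (X : Set α) (e : α) (Y : Set α) : Prop :=
  X ∪ {e} ∪ Y = M.E ∧ Disjoint X Y ∧ e ∉ X ∧ e ∉ Y ∧
    lam M X = 2 ∧ lam M Y = 2 ∧ e ∈ M.closure X ∧ e ∈ M.closure Y ∧
    3 ≤ r M X ∧ 3 ≤ r M Y

/-- `N` is a simplification of `M`: a restriction of `M` to a set of
representatives, one from each parallel class of nonloops. -/
def SimplificationOf (M N : Matroid α) : Prop :=
  ∃ X : Set α, (∀ x ∈ X, x ∈ M.E ∧ x ∉ M.closure ∅) ∧ N = M ↾ X ∧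
    ∀ y ∈ M.E, y ∉ M.closure ∅ →
      ∃! x, x ∈ X ∧ M.closure {y} = M.closure {x}

/-! Suppose `M \ e` has a 2-separation `(A, B)`. It cannot be a 1-separation, since deleting an
element from a 3-connected matroid on at least four elements keeps it connected. If `|A| = 2`,
then `A ∪ e` is a triad, so we may assume `|A|, |B| ≥ 3`. As `e ∈ cl(X)` and `λ(X ∪ e) ≥ 2`,
the element `e` also lies in the closure of `Y = E − X − e`, so `(X, Y)` is a 3-separation of
`M \ e` whose both sides span `e`. Uncrossing `(X, Y)` with `(A, B)` by submodularity of `λ`,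
one of two opposite corners has connectivity at most 1 in `M \ e`. The complement of every
corner contains `X` or `Y` and so spans `e`; hence a corner of connectivity at most 1 in `M \ e`
has the same connectivity in `M` and, by 3-connectivity, at most one element. Counting shows
that, as `X, Y, A, B` all have at least three elements, some two opposite corners both have at
least two. -/

variable {M : Matroid α} {X Y S A C D Z R : Set α} {e : α}

lemma two_le_ncard_opposite_corners {E : Set α} (hE : E.Finite) (hX : X ⊆ E) (hA : A ⊆ E)
    (hX3 : 3 ≤ X.ncard) (hY3 : 3 ≤ (E \ X).ncard) (hA3 : 3 ≤ A.ncard) (hB3 : 3 ≤ (E \ A).ncard) :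
    (2 ≤ (X ∩ A).ncard ∧ 2 ≤ ((E \ X) ∩ (E \ A)).ncard) ∨
      (2 ≤ (X ∩ (E \ A)).ncard ∧ 2 ≤ ((E \ X) ∩ A).ncard) := by
  have hX' := ncard_inter_add_ncard_sdiff_eq_ncard X A (hE.subset hX)
  have hY' := ncard_inter_add_ncard_sdiff_eq_ncard (E \ X) A hE.sdiff
  have hA' := ncard_inter_add_ncard_sdiff_eq_ncard A X (hE.subset hA)
  have hB' := ncard_inter_add_ncard_sdiff_eq_ncard (E \ A) X hE.sdiff
  rw [show X \ A = X ∩ (E \ A) by tauto_set] at hX'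
  rw [show (E \ X) \ A = (E \ X) ∩ (E \ A) by tauto_set] at hY'
  rw [show A ∩ X = X ∩ A by tauto_set, show A \ X = (E \ X) ∩ A by tauto_set] at hA'
  rw [show (E \ A) ∩ X = X ∩ (E \ A) by tauto_set,
    show (E \ A) \ X = (E \ X) ∩ (E \ A) by tauto_set] at hB'
  omega

lemma r_restrict (hSR : S ⊆ R) : r (M ↾ R) S = r M S := by
  have h : {I | (M ↾ R).Indep I ∧ I ⊆ S} = {I | M.Indep I ∧ I ⊆ S} := by
    ext I
    change (M ↾ R).Indep I ∧ I ⊆ S ↔ M.Indep I ∧ I ⊆ S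
    rw [restrict_indep_iff]
    exact ⟨fun h ↦ ⟨h.1.1, h.2⟩, fun h ↦ ⟨⟨h.1, h.2.trans hSR⟩, h.2⟩⟩
  rw [r, r, h]

lemma r_nonneg (M : Matroid α) (X : Set α) : 0 ≤ r M X :=
  Int.natCast_nonneg _

section RankFinite

variable [M.RankFinite]

lemma r_eq_toNat_eRk (X : Set α) : r M X = (M.eRk X).toNat := by
  obtain ⟨I, hI, hIfin⟩ := (M.isRkFinite_set X).exists_finite_isBasis'
  have hmax : IsGreatest (Set.ncard '' {J | M.Indep J ∧ J ⊆ X}) I.ncard := by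
    refine ⟨⟨I, ⟨hI.indep, hI.subset⟩, rfl⟩, ?_⟩
    rintro _ ⟨J, ⟨hJ, hJX⟩, rfl⟩
    exact ENat.toNat_le_toNat (hI.encard_eq_eRk ▸ hJ.encard_le_eRk_of_subset hJX)
      hIfin.encard_lt_top.ne
  rw [r, hmax.csSup_eq, ← hI.encard_eq_eRk, ncard_def]

lemma r_le_r_iff : r M X ≤ r M Y ↔ M.eRk X ≤ M.eRk Y := by
  rw [r_eq_toNat_eRk, r_eq_toNat_eRk, Nat.cast_le, ← ENat.natCast_le_natCast,
    ENat.natCast_toNat (by simp), ENat.natCast_toNat (by simp)]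

lemma r_mono (hXY : X ⊆ Y) : r M X ≤ r M Y :=
  r_le_r_iff.2 (M.eRk_mono hXY)

lemma r_inter_add_r_union_le (X Y : Set α) :
    r M (X ∩ Y) + r M (X ∪ Y) ≤ r M X + r M Y := by
  have h := ENat.toNat_le_toNat (M.eRk_inter_add_eRk_union_le X Y) (by simp)
  rw [ENat.toNat_add (by simp) (by simp), ENat.toNat_add (by simp) (by simp)] at h
  simp only [r_eq_toNat_eRk]
  exact_mod_cast h

lemma r_insert_le_add_one (e : α) (X : Set α) : r M (insert e X) ≤ r M X + 1 := by
  have h := ENat.toNat_le_toNat (M.eRk_insert_le_add_one e X) (by simp)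
  rw [ENat.toNat_add (by simp) ENat.one_ne_top, ENat.toNat_one] at h
  simp only [r_eq_toNat_eRk]
  exact_mod_cast h

lemma r_insert_of_mem_closure (he : e ∈ M.closure X) : r M (insert e X) = r M X := by
  refine le_antisymm (r_le_r_iff.2 ?_) (r_mono (subset_insert e X))
  rw [← M.eRk_insert_closure_eq, insert_eq_of_mem he, eRk_closure_eq]

lemma mem_closure_of_r_insert_le (he : e ∈ M.E) (h : r M (insert e X) ≤ r M X) :
    e ∈ M.closure X := by
  by_contra heX
  have h' := congrArg ENat.toNat (M.eRk_insert_eq_add_one ⟨he, heX⟩)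
  rw [ENat.toNat_add (by simp) ENat.one_ne_top, ENat.toNat_one] at h'
  rw [r_eq_toNat_eRk, r_eq_toNat_eRk, h'] at h
  push_cast at h
  omega

lemma r_le_ncard (hX : X.Finite) : r M X ≤ X.ncard := by
  rw [r_eq_toNat_eRk, ncard_def]
  exact_mod_cast ENat.toNat_le_toNat (M.eRk_le_encard X) hX.encard_lt_top.ne

lemma coindep_iff_r_le (hD : D ⊆ M.E) : M✶.Indep D ↔ r M M.E ≤ r M (M.E \ D) := by
  rw [← coindep_def, coindep_iff_compl_spanning hD, spanning_iff_eRk_le sdiff_subset, r_le_r_iff,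
    eRk_ground]

end RankFinite

lemma lam_compl (hS : S ⊆ M.E) : lam M (M.E \ S) = lam M S := by
  rw [lam, lam, sdiff_sdiff_cancel_left hS]
  ring

lemma lam_nonneg [M.RankFinite] (S : Set α) : 0 ≤ lam M S := by
  have hsub := r_inter_add_r_union_le (M := M) (M.E \ S) S
  have hE : r M M.E ≤ r M ((M.E \ S) ∪ S) := r_mono (subset_sdiff_union _ _)
  have h0 := r_nonneg M ((M.E \ S) ∩ S)
  rw [lam]
  linarith

lemma lam_inter_add_lam_union_le [M.RankFinite] (X Y : Set α) :
    lam M (X ∩ Y) + lam M (X ∪ Y) ≤ lam M X + lam M Y := by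
  have h1 := r_inter_add_r_union_le (M := M) X Y
  have h2 := r_inter_add_r_union_le (M := M) (M.E \ X) (M.E \ Y)
  rw [← sdiff_inter, sdiff_inter_sdiff] at h2
  simp only [lam]
  linarith

lemma mem_closure_compl_of_lam_le_lam_insert [M.RankFinite] (he : e ∈ M.closure X) (heX : e ∉ X)
    (h : lam M X ≤ lam M (insert e X)) : e ∈ M.closure (M.E \ insert e X) := by
  have heE := mem_ground_of_mem_closure he
  have hcompl : M.E \ X = insert e (M.E \ insert e X) := by
    ext x
    by_cases hx : x = e <;> simp_all
  refine mem_closure_of_r_insert_le heE ?_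
  rw [lam, lam, hcompl, r_insert_of_mem_closure he] at h
  linarith

@[simp] lemma del_ground (M : Matroid α) (D : Set α) : (Del M D).E = M.E \ D := rfl

instance del_rankFinite [M.RankFinite] : (Del M D).RankFinite :=
  restrict_rankFinite _

lemma lam_del (hS : S ⊆ M.E \ D) :
    lam (Del M D) S = r M S + r M ((M.E \ D) \ S) - r M (M.E \ D) := by
  rw [lam, del_ground, Del, r_restrict hS, r_restrict sdiff_subset, r_restrict subset_rfl]

lemma lam_del_compl (hS : S ⊆ M.E \ D) : lam (Del M D) ((M.E \ D) \ S) = lam (Del M D) S :=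
  lam_compl (M := Del M D) hS

lemma lam_del_le_lam [M.RankFinite] (he : e ∈ M.closure (M.E \ {e})) (hS : S ⊆ M.E \ {e}) :
    lam (Del M {e}) S ≤ lam M S := by
  have hE : r M M.E ≤ r M (M.E \ {e}) := by
    rw [← r_insert_of_mem_closure he]
    exact r_mono (subset_insert_sdiff_singleton _ _)
  have hc : r M ((M.E \ {e}) \ S) ≤ r M (M.E \ S) := r_mono (sdiff_subset_sdiff_left sdiff_subset)
  rw [lam_del hS, lam]
  linarith

lemma lam_le_lam_del_add_one [M.RankFinite] (hS : S ⊆ M.E \ {e}) :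
    lam M S ≤ lam (Del M {e}) S + 1 := by
  have h1 : r M (M.E \ S) ≤ r M ((M.E \ {e}) \ S) + 1 :=
    (r_mono (by rw [insert_eq]; tauto_set)).trans (r_insert_le_add_one e _)
  have h2 : r M (M.E \ {e}) ≤ r M M.E := r_mono sdiff_subset
  rw [lam_del hS, lam]
  linarith

lemma lam_le_lam_del_of_mem_closure [M.RankFinite] (hS : S ⊆ M.E \ {e})
    (he : e ∈ M.closure ((M.E \ {e}) \ S)) : lam M S ≤ lam (Del M {e}) S := by
  have h1 : r M (M.E \ S) ≤ r M ((M.E \ {e}) \ S) :=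
    (r_mono (by rw [insert_eq]; tauto_set)).trans (r_insert_of_mem_closure he).le
  have h2 : r M (M.E \ {e}) ≤ r M M.E := r_mono sdiff_subset
  rw [lam_del hS, lam]
  linarith

lemma ThreeConnected.min_le_lam [M.RankFinite] (hM : ThreeConnected M) (hS : S ⊆ M.E) :
    min (min (S.ncard : ℤ) (M.E \ S).ncard) 2 ≤ lam M S := by
  have h0 := lam_nonneg (M := M) S
  have h1 := hM 1 one_pos (by norm_num) S hS
  have h2 := hM 2 two_pos (by norm_num) S hS
  push_cast at h1 h2
  omega

lemma ThreeConnected.coindep_of_ncard_le_two [M.Finite] (hM : ThreeConnected M) (hD : D ⊆ M.E)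
    (hD2 : D.ncard ≤ 2) (hE : D.ncard + 2 ≤ M.E.ncard) : M✶.Indep D := by
  rw [coindep_iff_r_le hD]
  have hlam := hM.min_le_lam hD
  have hrD := r_le_ncard (M := M) (M.ground_finite.subset hD)
  have hc := ncard_sdiff_add_ncard_of_subset hD M.ground_finite
  rw [lam] at hlam
  omega

lemma ThreeConnected.triad_insert_of_lam_del_le_one [M.Finite] (hM : ThreeConnected M)
    (hE : 5 ≤ M.E.ncard) (heE : e ∈ M.E) (hA : A ⊆ M.E \ {e}) (hA2 : A.ncard = 2)
    (hlam : lam (Del M {e}) A ≤ 1) : Triad M (insert e A) := by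
  have hAE : A ⊆ M.E := hA.trans sdiff_subset
  have hTE : insert e A ⊆ M.E := insert_subset heE hAE
  have hT : (insert e A).ncard = 3 := by
    rw [ncard_insert_of_notMem (fun h ↦ (hA h).2 rfl) (M.ground_finite.subset hAE), hA2]
  refine ⟨⟨hTE, ?_, fun D hD ↦ ?_⟩, hT⟩
  · rw [coindep_iff_r_le hTE, insert_eq, ← sdiff_sdiff]
    have hlamM := hM.min_le_lam hAE
    have hc := ncard_sdiff_add_ncard_of_subset hAE M.ground_finite
    have h1 : r M (M.E \ A) ≤ r M M.E := r_mono sdiff_subset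
    have h2 : r M (M.E \ {e}) ≤ r M M.E := r_mono sdiff_subset
    rw [lam_del hA] at hlam
    rw [lam] at hlamM
    omega
  · have hD3 := ncard_lt_ncard hD (M.ground_finite.subset hTE)
    exact hM.coindep_of_ncard_le_two (hD.subset.trans hTE) (by omega) (by omega)

lemma ThreeConnected.one_le_lam_del [M.Finite] (hM : ThreeConnected M) (hE : 4 ≤ M.E.ncard)
    (heE : e ∈ M.E) (hA : A ⊆ M.E \ {e}) (hA1 : 1 ≤ A.ncard)
    (hB1 : 1 ≤ ((M.E \ {e}) \ A).ncard) : 1 ≤ lam (Del M {e}) A := by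
  have ncard_le_one : ∀ S ⊆ M.E \ {e}, S.ncard + 2 ≤ M.E.ncard → lam (Del M {e}) S < 1 →
      S.ncard ≤ 1 := by
    intro S hS hSE hSlam
    have h1 := hM.min_le_lam (hS.trans sdiff_subset)
    have h2 := lam_le_lam_del_add_one hS
    have hc := ncard_sdiff_add_ncard_of_subset (hS.trans sdiff_subset) M.ground_finite
    omega
  have hE' := ncard_sdiff_singleton_add_one heE M.ground_finite
  have hAB := ncard_sdiff_add_ncard_of_subset hA (M.ground_finite.sdiff)
  have hBlam := lam_del_compl hA
  by_contra! hlam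
  have hAs := ncard_le_one A hA (by omega) hlam
  have hBs := ncard_le_one _ sdiff_subset (by omega) (hBlam ▸ hlam)
  omega

lemma ThreeConnected.two_le_lam_del [M.Finite] (hM : ThreeConnected M) (hC : C ⊆ M.E \ {e})
    (hC2 : 2 ≤ C.ncard) (hZ : Z ⊆ (M.E \ {e}) \ C) (hZne : Z.Nonempty)
    (he : e ∈ M.closure Z) : 2 ≤ lam (Del M {e}) C := by
  have h1 := lam_le_lam_del_of_mem_closure hC (M.closure_subset_closure hZ he)
  have h2 := hM.min_le_lam (hC.trans sdiff_subset)
  have heZ : e ∉ Z := fun h ↦ (hZ h).1.2 rfl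
  have hsub : insert e Z ⊆ M.E \ C :=
    insert_subset ⟨mem_ground_of_mem_closure he, fun h ↦ (hC h).2 rfl⟩
      (hZ.trans (sdiff_subset_sdiff_left sdiff_subset))
  have h3 := ncard_le_ncard hsub M.ground_finite.sdiff
  have hZfin : Z.Finite := M.ground_finite.subset (hZ.trans (sdiff_subset.trans sdiff_subset))
  rw [ncard_insert_of_notMem heZ hZfin] at h3
  have h4 := (ncard_pos hZfin).2 hZne
  omega

lemma ThreeConnected.mem_closure_sdiff_of_lam_le_two [M.Finite] (hM : ThreeConnected M)
    (hXE : X ⊆ M.E) (hlam : lam M X ≤ 2) (hX : 1 ≤ X.ncard)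
    (hY : 2 ≤ ((M.E \ {e}) \ X).ncard) (he : e ∈ M.closure X \ X) :
    e ∈ M.closure ((M.E \ {e}) \ X) := by
  have hY_eq : M.E \ insert e X = (M.E \ {e}) \ X := by rw [insert_eq, sdiff_sdiff]
  have h := hM.min_le_lam (insert_subset (mem_ground_of_mem_closure he.1) hXE)
  rw [hY_eq, ncard_insert_of_notMem he.2 (M.ground_finite.subset hXE)] at h
  exact hY_eq ▸ mem_closure_compl_of_lam_le_lam_insert he.1 he.2 (by omega)

lemma ThreeConnected.one_lt_lam_del [M.Finite] (hM : ThreeConnected M) (hXE : X ⊆ M.E)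
    (hlam : lam M X ≤ 2) (hX3 : 3 ≤ X.ncard) (hE : X.ncard + 4 ≤ M.E.ncard)
    (he : e ∈ M.closure X \ X) (hA : A ⊆ M.E \ {e}) (hA3 : 3 ≤ A.ncard)
    (hB3 : 3 ≤ ((M.E \ {e}) \ A).ncard) : 1 < lam (Del M {e}) A := by
  have heE := mem_ground_of_mem_closure he.1
  have hXE' : X ⊆ M.E \ {e} := subset_sdiff_singleton hXE he.2
  have hY3 : 3 ≤ ((M.E \ {e}) \ X).ncard := by
    have := ncard_sdiff_add_ncard_of_subset hXE' M.ground_finite.sdiff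
    have := ncard_sdiff_singleton_add_one heE M.ground_finite
    omega
  have heY := hM.mem_closure_sdiff_of_lam_le_two hXE hlam (by omega) (by omega) he
  have hXlam : lam (Del M {e}) X ≤ 2 :=
    (lam_del_le_lam (M.closure_subset_closure hXE' he.1) hXE').trans hlam
  have hXne : X.Nonempty := nonempty_of_ncard_ne_zero (by omega)
  have hYne : ((M.E \ {e}) \ X).Nonempty := nonempty_of_ncard_ne_zero (by omega)
  by_contra! hAlam
  have hXA := lam_inter_add_lam_union_le (M := Del M {e}) X A
  have hXB := lam_inter_add_lam_union_le (M := Del M {e}) X ((M.E \ {e}) \ A)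
  rw [← lam_del_compl (union_subset hXE' hA),
    show (M.E \ {e}) \ (X ∪ A) = ((M.E \ {e}) \ X) ∩ ((M.E \ {e}) \ A) by tauto_set] at hXA
  rw [← lam_del_compl (union_subset hXE' sdiff_subset), lam_del_compl hA,
    show (M.E \ {e}) \ (X ∪ ((M.E \ {e}) \ A)) = ((M.E \ {e}) \ X) ∩ A by tauto_set] at hXB
  rcases two_le_ncard_opposite_corners M.ground_finite.sdiff hXE' hA hX3 hY3 hA3 hB3 with
    ⟨h1, h2⟩ | ⟨h1, h2⟩
  · have := hM.two_le_lam_del (inter_subset_left.trans hXE') h1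
      (sdiff_subset_sdiff_right inter_subset_left) hYne heY
    have := hM.two_le_lam_del (inter_subset_left.trans sdiff_subset) h2 (by tauto_set) hXne he.1
    omega
  · have := hM.two_le_lam_del (inter_subset_left.trans hXE') h1
      (sdiff_subset_sdiff_right inter_subset_left) hYne heY
    have := hM.two_le_lam_del (inter_subset_right.trans hA) h2 (by tauto_set) hXne he.1
    omega

/-- If `λ(X) = 2`, `|X| ≥ 3`, `|E(M)| ≥ |X| + 4` and `e ∈ cl(X) − X`, then `e`
is in a triad or `M \ e` is 3-connected. -/
theorem stmt9 (M : Matroid α) [M.Finite] (hM : ThreeConnected M)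
    {X : Set α} (hXE : X ⊆ M.E) (hlam : lam M X = 2) (hX3 : 3 ≤ X.ncard)
    (hE : X.ncard + 4 ≤ M.E.ncard) {e : α} (he : e ∈ M.closure X \ X) :
    (∃ T, Triad M T ∧ e ∈ T) ∨ ThreeConnected (Del M {e}) := by
  have heE : e ∈ M.E := mem_ground_of_mem_closure he.1
  refine or_iff_not_imp_left.2 fun hT k hk0 hk3 A hA hsep ↦ ?_
  obtain ⟨hlamA, hkA, hkB⟩ := hsep
  rw [del_ground] at hA hkB
  have no_triad : ∀ S ⊆ M.E \ {e}, S.ncard = 2 → lam (Del M {e}) S ≤ 1 → False :=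
    fun S hS hS2 hSlam ↦ hT ⟨_, hM.triad_insert_of_lam_del_le_one (by omega) heE hS hS2 hSlam,
      mem_insert e S⟩
  interval_cases k
  · have := hM.one_le_lam_del (by omega) heE hA (by omega) (by omega)
    omega
  · have hA3 : 3 ≤ A.ncard := by
      by_contra!
      exact no_triad A hA (by omega) (by omega)
    have hB3 : 3 ≤ ((M.E \ {e}) \ A).ncard := by
      by_contra!
      exact no_triad ((M.E \ {e}) \ A) sdiff_subset (by omega) (by rw [lam_del_compl hA]; omega)
    have := hM.one_lt_lam_del hXE hlam.le hX3 hE he hA hA3 hB3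
    omega
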